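/- For all positive integers s and t with t > s, the functions F_1 and F_2 satisfy 3·s·t·K(s,t) < 2·F_1(s,t), F_1(s,t) < F_2(s,t), and F_2(s,t) < 158·s·t·K(s,t); equivalently, 3s/2 < F_1(s,t)/(t·K(s,t)) < F_2(s,t)/(t·K(s,t)) < 158s. -/

import Mathlib

/-- The pair `(K(s,t), K'(s,t))` of auxiliary functions, defined for positive integers `s, t`:
`K(1,t) = 2`, `K'(1,t) = 5`; `K(s,1) = 2^s`, `K'(s,1) = 2^s + 3`; and for `s, t > 1`,
`K(s,t) = K(s,t-1) * K(s-1, K'(s,t-1))` and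
`K'(s,t) = K'(s,t-1) * K(s-1, K'(s,t-1)) + K'(s-1, K'(s,t-1))`.
(The value at arguments equal to `0` is junk.) -/
def KK : ℕ → ℕ → ℕ × ℕ
  | 0, _ => (0, 0)
  | 1, _ => (2, 5)
  | _+2, 0 => (0, 0)
  | s+2, 1 => (2^(s+2), 2^(s+2) + 3)
  | s+2, t+2 =>
    let p := KK (s+2) (t+1)
    let q := KK (s+1) p.2
    (p.1 * q.1, p.2 * q.1 + q.2)
termination_by s t => (s, t)

/-- The function `K(s,t)`. -/
def K (s t : ℕ) : ℕ := (KK s t).1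

/-- The function `K'(s,t)`. -/
def K' (s t : ℕ) : ℕ := (KK s t).2

/-- The function `R(s,t)` (root triangles minus teeth of `X(s,t)`), defined for positive
integers `s, t`: `R(1,t) = 0`, `R(s,1) = 0`, and
`R(s,t) = 2 * K(s-1, K'(s,t-1)) + R(s-1, K'(s,t-1))` for `s, t > 1`.
(The value at arguments equal to `0` is junk.) -/
def R : ℕ → ℕ → ℕ
  | 0, _ => 0
  | 1, _ => 0
  | _+2, 0 => 0
  | _+2, 1 => 0
  | s+2, t+2 => 2 * K (s+1) (K' (s+2) (t+1)) + R (s+1) (K' (s+2) (t+1))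
termination_by s t => (s, t)

/-- The face number `F_0(s,t)` of the sphere `S(s,t)`:
`F_0(1,t) = 2t + 7` for `t > 1`, `F_0(s,1) = 2^(s+1) + 5`, and for `s, t > 1`,
`F_0(s,t) = K(s-1,K'(s,t-1)) * (F_0(s,t-1) + R(s,t-1) - 2) + F_0(s-1,K'(s,t-1))`.
(The value at arguments equal to `0` is junk; the subtraction never truncates.) -/
def F0 : ℕ → ℕ → ℕ
  | 0, _ => 0
  | _+1, 0 => 0
  | s+1, 1 => 2^(s+2) + 5
  | 1, t+2 => 2*(t+2) + 7
  | s+2, t+2 =>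
      K (s+1) (K' (s+2) (t+1)) * (F0 (s+2) (t+1) + R (s+2) (t+1) - 2)
        + F0 (s+1) (K' (s+2) (t+1))
termination_by s t => (s, t)

/-- The face number `F_1(s,t)` of the sphere `S(s,t)`:
`F_1(1,t) = 10t + 15` for `t > 1`, `F_1(s,1) = 3 * 2^(s+1) + 9`, and for `s, t > 1`,
`F_1(s,t) = K(s-1,K'(s,t-1)) * (F_1(s,t-1) + 3K'(s,t-1) + 3R(s,t-1) - 4) + F_1(s-1,K'(s,t-1))`.
(The value at arguments equal to `0` is junk; the subtraction never truncates.) -/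
def F1 : ℕ → ℕ → ℕ
  | 0, _ => 0
  | _+1, 0 => 0
  | s+1, 1 => 3 * 2^(s+2) + 9
  | 1, t+2 => 10*(t+2) + 15
  | s+2, t+2 =>
      K (s+1) (K' (s+2) (t+1))
          * (F1 (s+2) (t+1) + 3 * K' (s+2) (t+1) + 3 * R (s+2) (t+1) - 4)
        + F1 (s+1) (K' (s+2) (t+1))
termination_by s t => (s, t)

/-- The face number `F_2(s,t)` of the sphere `S(s,t)`:
`F_2(1,t) = 16t + 12` for `t > 1`, `F_2(s,1) = 2^(s+3) + 8`, and for `s, t > 1`,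
`F_2(s,t) = K(s-1,K'(s,t-1)) * (F_2(s,t-1) + 3K'(s,t-1) + 4R(s,t-1) + 1) + F_2(s-1,K'(s,t-1))`.
(The value at arguments equal to `0` is junk.) -/
def F2 : ℕ → ℕ → ℕ
  | 0, _ => 0
  | _+1, 0 => 0
  | s+1, 1 => 2^(s+4) + 8
  | 1, t+2 => 16*(t+2) + 12
  | s+2, t+2 =>
      K (s+1) (K' (s+2) (t+1))
          * (F2 (s+2) (t+1) + 3 * K' (s+2) (t+1) + 4 * R (s+2) (t+1) + 1)
        + F2 (s+1) (K' (s+2) (t+1))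
termination_by s t => (s, t)

/-- The face number `F_3(s,t)` of the sphere `S(s,t)`:
`F_3(1,t) = 8t + 4` for `t > 1`, `F_3(s,1) = 2^(s+2) + 4`, and for `s, t > 1`,
`F_3(s,t) = K(s-1,K'(s,t-1)) * (F_3(s,t-1) + 2R(s,t-1) + 3) + F_3(s-1,K'(s,t-1))`.
(The value at arguments equal to `0` is junk.) -/
def F3 : ℕ → ℕ → ℕ
  | 0, _ => 0
  | _+1, 0 => 0
  | s+1, 1 => 2^(s+3) + 4
  | 1, t+2 => 8*(t+2) + 4
  | s+2, t+2 =>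
      K (s+1) (K' (s+2) (t+1)) * (F3 (s+2) (t+1) + 2 * R (s+2) (t+1) + 3)
        + F3 (s+1) (K' (s+2) (t+1))
termination_by s t => (s, t)

/-! `K`, `K'`, `R`, `F_1`, `F_2` all follow one recursion pattern: the value at `(s, t)` is
built from the values at `(s, t-1)`, multiplied by `K(s-1, K'(s,t-1))`, and at
`(s-1, K'(s,t-1))`. So every bound is proved by induction along this recursion
(`KK_induction`), comparing a face number with `K(s,t)` times an affine function of `t`.
The slopes close up because `K'` is only slightly larger than `K`: `K + 3 ≤ K'` and
`2^s (K' + 8) ≤ (2^s + 11) K`, while `R ≤ K`. This gives `((3s+3)t + 9) K ≤ 2 F_1 + 3s K`,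
`F_1 + K ≤ F_2` and `F_2 ≤ (c_s t + 6) K` with `c_s ≤ 100 s`, and `t > s` finishes. -/

@[simp] lemma K_one_left (t : ℕ) : K 1 t = 2 := by simp [K, KK]

@[simp] lemma K'_one_left (t : ℕ) : K' 1 t = 5 := by simp [K', KK]

lemma K_succ_one (s : ℕ) : K (s + 1) 1 = 2 ^ (s + 1) := by
  rcases s with _ | s <;> simp [K, KK]

lemma K'_succ_one (s : ℕ) : K' (s + 1) 1 = 2 ^ (s + 1) + 3 := by
  rcases s with _ | s <;> simp [K', KK]

lemma K_succ_succ (s t : ℕ) :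
    K (s + 2) (t + 2) = K (s + 2) (t + 1) * K (s + 1) (K' (s + 2) (t + 1)) := by
  rw [K, KK]; rfl

lemma K'_succ_succ (s t : ℕ) :
    K' (s + 2) (t + 2) =
      K' (s + 2) (t + 1) * K (s + 1) (K' (s + 2) (t + 1)) + K' (s + 1) (K' (s + 2) (t + 1)) := by
  rw [K', KK]; rfl

@[simp] lemma R_one_left (t : ℕ) : R 1 t = 0 := by rw [R]

lemma R_succ_one (s : ℕ) : R (s + 1) 1 = 0 := by
  rcases s with _ | s <;> rw [R]

lemma R_succ_succ (s t : ℕ) :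
    R (s + 2) (t + 2) = 2 * K (s + 1) (K' (s + 2) (t + 1)) + R (s + 1) (K' (s + 2) (t + 1)) := by
  rw [R]

lemma F1_one_left (t : ℕ) : F1 1 (t + 2) = 10 * (t + 2) + 15 := by rw [F1]

lemma F1_succ_one (s : ℕ) : F1 (s + 1) 1 = 3 * 2 ^ (s + 2) + 9 := by rw [F1]

lemma F2_one_left (t : ℕ) : F2 1 (t + 2) = 16 * (t + 2) + 12 := by rw [F2]

lemma F2_succ_one (s : ℕ) : F2 (s + 1) 1 = 2 ^ (s + 4) + 8 := by rw [F2]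

lemma F2_succ_succ (s t : ℕ) :
    F2 (s + 2) (t + 2) =
      K (s + 1) (K' (s + 2) (t + 1)) *
          (F2 (s + 2) (t + 1) + 3 * K' (s + 2) (t + 1) + 4 * R (s + 2) (t + 1) + 1)
        + F2 (s + 1) (K' (s + 2) (t + 1)) := by
  rw [F2]

@[elab_as_elim]
theorem KK_induction {P : ℕ → ℕ → Prop} (one_left : ∀ t, P 1 (t + 2))
    (succ_one : ∀ s, P (s + 1) 1)
    (succ_succ : ∀ s t, P (s + 2) (t + 1) → (∀ u, 0 < u → P (s + 1) u) →
      P (s + 2) (t + 2))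
    {s t : ℕ} (hs : 0 < s) (ht : 0 < t) : P s t := by
  obtain ⟨s, rfl⟩ := Nat.exists_eq_add_of_lt hs
  obtain ⟨t, rfl⟩ := Nat.exists_eq_add_of_lt ht
  simp only [zero_add]
  clear hs ht
  induction s generalizing t with
  | zero => rcases t with _ | t; exacts [succ_one 0, one_left t]
  | succ s ihs =>
    induction t with
    | zero => exact succ_one (s + 1)
    | succ t iht =>
      refine succ_succ s t iht fun u hu => ?_
      obtain ⟨u, rfl⟩ := Nat.exists_eq_add_of_lt hu
      simpa using ihs u

lemma two_pow_le_K_and_K_add_three_le_K' {s t : ℕ} (hs : 0 < s) (ht : 0 < t) :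
    2 ^ s ≤ K s t ∧ K s t + 3 ≤ K' s t := by
  refine KK_induction (fun t => ?_) (fun s => ?_) (fun s t ih ihs => ?_) hs ht
  · simp
  · simp [K_succ_one, K'_succ_one]
  · obtain ⟨hK, hK'⟩ := ih
    rw [K_succ_succ, K'_succ_succ]
    set k := K' (s + 2) (t + 1)
    set m := K (s + 1) k
    obtain ⟨hm, hm'⟩ := ihs k (by omega)
    have hm1 : 1 ≤ m := Nat.one_le_two_pow.trans hm
    constructor
    · exact hK.trans (Nat.le_mul_of_pos_right _ hm1)
    · nlinarith

lemma two_pow_le_K {s t : ℕ} (hs : 0 < s) (ht : 0 < t) : 2 ^ s ≤ K s t :=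
  (two_pow_le_K_and_K_add_three_le_K' hs ht).1

lemma K_add_three_le_K' {s t : ℕ} (hs : 0 < s) (ht : 0 < t) : K s t + 3 ≤ K' s t :=
  (two_pow_le_K_and_K_add_three_le_K' hs ht).2

lemma K_pos {s t : ℕ} (hs : 0 < s) (ht : 0 < t) : 0 < K s t :=
  (Nat.two_pow_pos s).trans_le (two_pow_le_K hs ht)

lemma K'_pos {s t : ℕ} (hs : 0 < s) (ht : 0 < t) : 0 < K' s t := by
  have := K_add_three_le_K' hs ht
  omega

lemma F1_succ_succ_add (s t : ℕ) :
    F1 (s + 2) (t + 2) + 4 * K (s + 1) (K' (s + 2) (t + 1)) =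
      K (s + 1) (K' (s + 2) (t + 1)) *
          (F1 (s + 2) (t + 1) + 3 * K' (s + 2) (t + 1) + 3 * R (s + 2) (t + 1))
        + F1 (s + 1) (K' (s + 2) (t + 1)) := by
  have hk := K_add_three_le_K' (s := s + 2) (t := t + 1) (by omega) (by omega)
  have h4 : 4 ≤ F1 (s + 2) (t + 1) + 3 * K' (s + 2) (t + 1) + 3 * R (s + 2) (t + 1) := by
    omega
  rw [F1]
  zify [h4]
  ring

lemma K'_add_eight_le_eight_mul_K {s t : ℕ} (hs : 0 < s) (ht : 0 < t) :
    K' s t + 8 ≤ 8 * K s t := by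
  refine KK_induction (fun t => ?_) (fun s => ?_) (fun s t ih ihs => ?_) hs ht
  · simp
  · rw [K_succ_one, K'_succ_one]
    have := Nat.one_le_two_pow (n := s + 1)
    omega
  · rw [K_succ_succ, K'_succ_succ]
    set k := K' (s + 2) (t + 1)
    have := ihs k (K'_pos (by omega) (by omega))
    nlinarith [Nat.mul_le_mul_right (K (s + 1) k) ih]

lemma two_pow_mul_K'_add_eight_le {s t : ℕ} (hs : 0 < s) (ht : 0 < t) :
    2 ^ s * (K' s t + 8) ≤ (2 ^ s + 11) * K s t := by
  refine KK_induction (fun t => ?_) (fun s => ?_) (fun s t ih _ => ?_) hs ht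
  · simp
  · rw [K_succ_one, K'_succ_one]
    exact le_of_eq (by ring)
  · rw [K_succ_succ, K'_succ_succ]
    set k := K' (s + 2) (t + 1)
    set m := K (s + 1) k
    have hm := K'_add_eight_le_eight_mul_K (s := s + 1) (t := k) (by omega)
      (K'_pos (by omega) (by omega))
    nlinarith [Nat.mul_le_mul_right m ih, Nat.mul_le_mul_left (2 ^ (s + 2)) hm]

lemma R_le_K {s t : ℕ} (hs : 0 < s) (ht : 0 < t) : R s t ≤ K s t := by
  refine KK_induction (fun t => ?_) (fun s => ?_) (fun s t _ ihs => ?_) hs ht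
  · simp
  · simp [R_succ_one]
  · rw [R_succ_succ, K_succ_succ]
    set k := K' (s + 2) (t + 1)
    have hR := ihs k (K'_pos (by omega) (by omega))
    have hK : 4 ≤ K (s + 2) (t + 1) :=
      (Nat.pow_le_pow_right two_pos (by omega) : 2 ^ 2 ≤ 2 ^ (s + 2)).trans
        (two_pow_le_K (by omega) (by omega))
    nlinarith

/-- The slope `c_s` in `F_2(s,t) ≤ (c_s t + 6) K(s,t)`. The induction step needs
`2^s c_s ≥ (c_{s-1} + 3)(2^s + 11) + 4 · 2^s`, which this recursion satisfies after rounding up;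
as `11 / 2^s` decays, `c_s` grows only linearly. -/
def f2Slope : ℕ → ℕ
  | 0 | 1 => 8
  | s + 2 => f2Slope (s + 1) + 8 + 11 * (f2Slope (s + 1) + 3) / 2 ^ (s + 2)

lemma eight_le_f2Slope (s : ℕ) : 8 ≤ f2Slope s := by
  rcases s with _ | _ | s
  iterate 2 exact le_rfl
  exact Nat.le_add_right_of_le (Nat.le_add_left 8 _)

lemma le_two_pow_mul_f2Slope_succ_succ (s : ℕ) :
    (f2Slope (s + 1) + 3) * (2 ^ (s + 2) + 11) + 4 * 2 ^ (s + 2) ≤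
      2 ^ (s + 2) * f2Slope (s + 2) := by
  have := Nat.lt_mul_div_succ (11 * (f2Slope (s + 1) + 3)) (Nat.two_pow_pos (s + 2))
  rw [f2Slope]
  nlinarith

lemma f2Slope_induction_step (s k n : ℕ)
    (h : 2 ^ (s + 2) * (k + 8) ≤ (2 ^ (s + 2) + 11) * n) :
    (f2Slope (s + 1) + 3) * k + 4 * n + 7 ≤ f2Slope (s + 2) * n := by
  have h' := Nat.mul_le_mul_left (f2Slope (s + 1) + 3) h
  have spec := Nat.mul_le_mul_right n (le_two_pow_mul_f2Slope_succ_succ s)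
  refine Nat.le_of_mul_le_mul_left ?_ (Nat.two_pow_pos (s + 2))
  set P := 2 ^ (s + 2)
  set c := f2Slope (s + 1)
  nlinarith [Nat.zero_le (P * c)]

lemma f2Slope_le {s : ℕ} (hs : 0 < s) : f2Slope s ≤ 100 * s := by
  obtain hs6 | hs6 := lt_or_ge s 6
  · interval_cases s <;> decide
  have hpow (s : ℕ) (hs : 5 ≤ s) : 11 * (100 * s + 103) ≤ 92 * 2 ^ (s + 2) := by
    induction s, hs using Nat.le_induction with
    | base => norm_num
    | succ s _ ih => rw [pow_succ]; omega
  clear hs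
  induction s, hs6 using Nat.le_induction with
  | base => decide
  | succ s hs ih =>
    obtain ⟨s, rfl⟩ : ∃ r, s = r + 1 := ⟨s - 1, by omega⟩
    have := hpow s (by omega)
    have : 11 * (f2Slope (s + 1) + 3) / 2 ^ (s + 2) ≤ 92 :=
      Nat.div_le_of_le_mul (by omega : 11 * (f2Slope (s + 1) + 3) ≤ 2 ^ (s + 2) * 92)
    show f2Slope (s + 2) ≤ 100 * (s + 2)
    rw [f2Slope]
    omega

lemma F1_lower_bound {s t : ℕ} (hs : 0 < s) (ht : 0 < t) :
    ((3 * s + 3) * t + 9) * K s t ≤ 2 * F1 s t + 3 * s * K s t := by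
  refine KK_induction (fun t => ?_) (fun s => ?_) (fun s t ih ihs => ?_) hs ht
  · rw [F1_one_left, K_one_left]
    omega
  · rw [F1_succ_one, K_succ_one, pow_succ 2 (s + 1)]
    nlinarith
  · have hF1 := F1_succ_succ_add s t
    rw [K_succ_succ]
    set k := K' (s + 2) (t + 1)
    set m := K (s + 1) k
    have hG := ihs k (K'_pos (by omega) (by omega))
    have hk := K_add_three_le_K' (s := s + 2) (t := t + 1) (by omega) (by omega)
    have key : (3 * s + 9) * K (s + 2) (t + 1) + 3 * s + 2 ≤ (3 * s + 12) * k := by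
      nlinarith
    nlinarith [Nat.mul_le_mul_right m ih, Nat.mul_le_mul_right m key]

lemma F1_add_K_le_F2 {s t : ℕ} (hs : 0 < s) (ht : 0 < t) : F1 s t + K s t ≤ F2 s t := by
  refine KK_induction (fun t => ?_) (fun s => ?_) (fun s t ih ihs => ?_) hs ht
  · rw [F1_one_left, F2_one_left, K_one_left]
    omega
  · rw [F1_succ_one, F2_succ_one, K_succ_one, pow_succ 2 (s + 1), pow_add 2 (s + 1) 3]
    linarith [Nat.one_le_two_pow (n := s + 1)]
  · have hF1 := F1_succ_succ_add s t
    rw [F2_succ_succ, K_succ_succ]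
    set k := K' (s + 2) (t + 1)
    set m := K (s + 1) k
    have hG := ihs k (K'_pos (by omega) (by omega))
    nlinarith [Nat.mul_le_mul_right m ih]

lemma F2_le_f2Slope_mul {s t : ℕ} (hs : 0 < s) (ht : 0 < t) :
    F2 s t ≤ (f2Slope s * t + 6) * K s t := by
  refine KK_induction (fun t => ?_) (fun s => ?_) (fun s t ih ihs => ?_) hs ht
  · rw [F2_one_left, K_one_left]
    simp only [f2Slope]
    omega
  · rw [F2_succ_one, K_succ_one, pow_add 2 (s + 1) 3]
    have : 2 ≤ 2 ^ (s + 1) := Nat.le_self_pow (by omega) 2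
    nlinarith [Nat.mul_le_mul_right (2 ^ (s + 1)) (eight_le_f2Slope (s + 1))]
  · rw [F2_succ_succ, K_succ_succ]
    set k := K' (s + 2) (t + 1)
    set m := K (s + 1) k
    have hG := ihs k (K'_pos (by omega) (by omega))
    have hR := R_le_K (s := s + 2) (t := t + 1) (by omega) (by omega)
    have key := f2Slope_induction_step s k _
      (two_pow_mul_K'_add_eight_le (s := s + 2) (t := t + 1) (by omega) (by omega))
    nlinarith [Nat.mul_le_mul_right m ih, Nat.mul_le_mul_right m hR, Nat.mul_le_mul_right m key]

/-- Proposition (face-asymptotics, second part): for all positive integers `s` and `t`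
with `t > s`, `3s/2 < F_1(s,t)/(t*K(s,t)) < F_2(s,t)/(t*K(s,t)) < 158s`; in integer form,
`3 * s * t * K(s,t) < 2 * F_1(s,t)`, `F_1(s,t) < F_2(s,t)`, and
`F_2(s,t) < 158 * s * t * K(s,t)`. -/
theorem F1_F2_bounds (s t : ℕ) (hs : 0 < s) (hts : s < t) :
    3 * s * (t * K s t) < 2 * F1 s t ∧ F1 s t < F2 s t ∧
      F2 s t < 158 * s * (t * K s t) := by
  have ht : 0 < t := hs.trans hts
  have hK := K_pos hs ht
  refine ⟨?_, ?_, ?_⟩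
  · nlinarith [F1_lower_bound hs ht, Nat.mul_le_mul_right (K s t) hts.le]
  · have := F1_add_K_le_F2 hs ht
    omega
  · calc F2 s t ≤ (f2Slope s * t + 6) * K s t := F2_le_f2Slope_mul hs ht
      _ ≤ (100 * s * t + 6) * K s t := by gcongr; exact f2Slope_le hs
      _ < 158 * s * (t * K s t) := by
        nlinarith [Nat.mul_le_mul_right (K s t) (Nat.mul_le_mul hs hts)]
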